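/- Fix constants k₁ = 0.168, k₂ = 0.144, k₃ = 0.002, t₁ = 0.876, t₂ = 0.525, t₃ = 0.603 and α ∈ (0,1). Define, as a function of the noise power N₀ > 0, Pe_hb1(N₀) = (2(C₁₁+C₁₃) + C₁₂+C₁₄)/2 with N₁ᵦ = N₀ + 1 − α, C₁₁ = Σᵢ kᵢ/(tᵢα/N₀+1), C₁₂ = Σᵢ kᵢ/(2tᵢα/N₀+1), C₁₃ = Σᵢ kᵢ/(tᵢα/N₁ᵦ+1), C₁₄ = Σᵢ kᵢ/(2tᵢα/N₁ᵦ+1). Then Pe_hb1 is strictly increasing on (0,∞), and as N₀ → 0⁺ it converges to the strictly positive limit (2·Σᵢ kᵢ/(tᵢα/(1−α)+1) + Σᵢ kᵢ/(2tᵢα/(1−α)+1))/2; in particular Pe_hb1 does not tend to 0 as the noise power vanishes. -/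
import Mathlib

open Filter

lemma aux_zero (k t α : ℝ) (ht : 0 < t) (hα : 0 < α) :
    Tendsto (fun N : ℝ => k / (t * α / N + 1)) (nhdsWithin 0 (Set.Ioi 0)) (nhds 0) := by
  have h1 : Tendsto (fun N : ℝ => t * α / N) (nhdsWithin 0 (Set.Ioi 0)) atTop := by
    have := tendsto_inv_nhdsGT_zero.const_mul_atTop (mul_pos ht hα)
    simpa [div_eq_mul_inv] using this
  have h2 : Tendsto (fun N : ℝ => t * α / N + 1) (nhdsWithin 0 (Set.Ioi 0)) atTop :=
    tendsto_atTop_add_const_right _ 1 h1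
  exact Tendsto.div_atTop tendsto_const_nhds h2

lemma aux_lim (k t α : ℝ) (ht : 0 ≤ t) (hα : 0 ≤ α) (hα1 : α < 1) :
    Tendsto (fun N : ℝ => k / (t * α / (N + 1 - α) + 1)) (nhdsWithin 0 (Set.Ioi 0))
      (nhds (k / (t * α / (1 - α) + 1))) := by
  have hc : (0:ℝ) < 1 - α := by linarith
  have hbase : Tendsto (fun N : ℝ => N + 1 - α) (nhdsWithin 0 (Set.Ioi 0)) (nhds (1 - α)) := by
    have : Tendsto (fun N : ℝ => N + 1 - α) (nhds 0) (nhds ((0:ℝ) + 1 - α)) :=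
      ((continuous_id.add continuous_const).sub continuous_const).tendsto 0
    simpa using this.mono_left nhdsWithin_le_nhds
  have hden : Tendsto (fun N : ℝ => t * α / (N + 1 - α) + 1) (nhdsWithin 0 (Set.Ioi 0))
      (nhds (t * α / (1 - α) + 1)) :=
    (tendsto_const_nhds.div hbase hc.ne').add tendsto_const_nhds
  have hpos : t * α / (1 - α) + 1 ≠ 0 := by positivity
  exact tendsto_const_nhds.div hden hpos

/-- As a function of the noise power `N₀`, the bound Pe_hb1 is strictly
increasing on `(0,∞)`, and as `N₀ → 0⁺` it converges to the strictly positive limit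
`(2·Σᵢ kᵢ/(tᵢα/(1-α)+1) + Σᵢ kᵢ/(2tᵢα/(1-α)+1))/2`; in particular it does not
vanish as the noise power goes to zero. -/
theorem stmt_17 (k₁ k₂ k₃ t₁ t₂ t₃ : ℝ)
    (hk₁ : k₁ = 0.168) (hk₂ : k₂ = 0.144) (hk₃ : k₃ = 0.002)
    (ht₁ : t₁ = 0.876) (ht₂ : t₂ = 0.525) (ht₃ : t₃ = 0.603)
    (α : ℝ) (hα : α ∈ Set.Ioo (0:ℝ) 1)
    (Pehb1 : ℝ → ℝ)
    (hPehb1 : ∀ N₀ : ℝ,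
      Pehb1 N₀ = (2 * ((k₁ / (t₁ * α / N₀ + 1) + k₂ / (t₂ * α / N₀ + 1)
            + k₃ / (t₃ * α / N₀ + 1))
          + (k₁ / (t₁ * α / (N₀ + 1 - α) + 1) + k₂ / (t₂ * α / (N₀ + 1 - α) + 1)
            + k₃ / (t₃ * α / (N₀ + 1 - α) + 1)))
        + (k₁ / (2 * t₁ * α / N₀ + 1) + k₂ / (2 * t₂ * α / N₀ + 1)
            + k₃ / (2 * t₃ * α / N₀ + 1))
        + (k₁ / (2 * t₁ * α / (N₀ + 1 - α) + 1) + k₂ / (2 * t₂ * α / (N₀ + 1 - α) + 1)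
            + k₃ / (2 * t₃ * α / (N₀ + 1 - α) + 1))) / 2)
    (ℓ : ℝ)
    (hℓ : ℓ = (2 * (k₁ / (t₁ * α / (1 - α) + 1) + k₂ / (t₂ * α / (1 - α) + 1)
            + k₃ / (t₃ * α / (1 - α) + 1))
        + (k₁ / (2 * t₁ * α / (1 - α) + 1) + k₂ / (2 * t₂ * α / (1 - α) + 1)
            + k₃ / (2 * t₃ * α / (1 - α) + 1))) / 2) :
    StrictMonoOn Pehb1 (Set.Ioi 0) ∧
    Tendsto Pehb1 (nhdsWithin 0 (Set.Ioi 0)) (nhds ℓ) ∧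
    0 < ℓ := by
  obtain ⟨hα0, hα1⟩ := hα
  have h1α : (0:ℝ) < 1 - α := by linarith
  subst hk₁ hk₂ hk₃ ht₁ ht₂ ht₃ hℓ
  refine ⟨?_, ?_, ?_⟩
  · intro x hx y hy hxy
    have hx0 : (0:ℝ) < x := hx
    have hy0 : (0:ℝ) < y := hy
    have hx1 : (0:ℝ) < x + 1 - α := by linarith
    have hy1 : (0:ℝ) < y + 1 - α := by linarith
    rw [hPehb1 x, hPehb1 y]
    have hxy1 : x + 1 - α < y + 1 - α := by linarith
    gcongr
  · have T := ((((((aux_zero 0.168 0.876 α (by norm_num) hα0).add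
        (aux_zero 0.144 0.525 α (by norm_num) hα0)).add
        (aux_zero 0.002 0.603 α (by norm_num) hα0)).add
        (((aux_lim 0.168 0.876 α (by norm_num) hα0.le hα1).add
        (aux_lim 0.144 0.525 α (by norm_num) hα0.le hα1)).add
        (aux_lim 0.002 0.603 α (by norm_num) hα0.le hα1))).const_mul 2).add
        (((aux_zero 0.168 (2*0.876) α (by norm_num) hα0).add
        (aux_zero 0.144 (2*0.525) α (by norm_num) hα0)).add
        (aux_zero 0.002 (2*0.603) α (by norm_num) hα0))).add
        (((aux_lim 0.168 (2*0.876) α (by norm_num) hα0.le hα1).add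
        (aux_lim 0.144 (2*0.525) α (by norm_num) hα0.le hα1)).add
        (aux_lim 0.002 (2*0.603) α (by norm_num) hα0.le hα1))
    have T2 := T.div_const 2
    have heq : Tendsto Pehb1 (nhdsWithin 0 (Set.Ioi 0))
        (nhds ((2 * (0 + 0 + 0 + ((0.168 / (0.876 * α / (1 - α) + 1)
          + 0.144 / (0.525 * α / (1 - α) + 1)) + 0.002 / (0.603 * α / (1 - α) + 1)))
          + (0 + 0 + 0)
          + ((0.168 / (2 * 0.876 * α / (1 - α) + 1) + 0.144 / (2 * 0.525 * α / (1 - α) + 1))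
            + 0.002 / (2 * 0.603 * α / (1 - α) + 1))) / 2)) := by
      refine Tendsto.congr (fun N => (hPehb1 N).symm) ?_
      convert T2 using 2
    convert heq using 2
    ring
  · positivity
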